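/- arXiv:2303.12176 — 2 statements merged into one kernel-verified Lean document; each statement's English description precedes it below -/
import Mathlib

section
/- Let 𝒜 be a finite category (finitely many objects and finitely many morphisms), let Z be its zeta matrix, the square matrix indexed by the objects of 𝒜 with Z(a,b) = |Hom(a,b)| viewed in ℂ, and let X satisfy the four Penrose equations for Z. If Z admits both a weighting (a vector k with Z·k = 1) and a coweighting (a vector k' with k'ᵀ·Z = 1ᵀ), then the magnitude of 𝒜 equals the sum of all entries of X: χ(𝒜) = ∑ₐ∑_b X(a,b). -/
open Matrix CategoryTheory

/-!
Pairing `Z X Z = Z` with a coweighting `k'` on the left and a weighting `k` on the right gives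
`k'ᵀ Z k = 1ᵀ X 1`, while `k'ᵀ Z = 1ᵀ` makes the left side `∑ k`.
-/

namespace Matrix

variable {ι R : Type*} [Fintype ι] [CommSemiring R] {Z : Matrix ι ι R} {k k' : ι → R}

theorem dotProduct_mulVec_eq_sum_of_vecMul_eq_one (hk' : k' ᵥ* Z = 1) :
    k' ⬝ᵥ (Z *ᵥ k) = ∑ i, k i := by
  rw [dotProduct_mulVec, hk', one_dotProduct]

theorem dotProduct_mulVec_mul_mul_eq_sum_entries (hk : Z *ᵥ k = 1) (hk' : k' ᵥ* Z = 1)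
    (M : Matrix ι ι R) : k' ⬝ᵥ ((Z * M * Z) *ᵥ k) = ∑ i, ∑ j, M i j := by
  rw [← mulVec_mulVec, hk, dotProduct_mulVec, ← vecMul_vecMul, hk', dotProduct_one]
  simp only [vecMul, one_dotProduct]
  exact Finset.sum_comm

theorem sum_weighting_eq_sum_entries_of_mul_mul_eq_self (hk : Z *ᵥ k = 1) (hk' : k' ᵥ* Z = 1)
    {X : Matrix ι ι R} (hX : Z * X * Z = Z) : ∑ i, k i = ∑ i, ∑ j, X i j := by
  rw [← dotProduct_mulVec_eq_sum_of_vecMul_eq_one hk', ← hX,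
    dotProduct_mulVec_mul_mul_eq_sum_entries hk hk']

end Matrix

/-- Let `𝒜` be a finite category with zeta matrix `Z` (given by
`Z a b = |Hom(a,b)|` viewed in `ℂ`), and let `X` satisfy the four Penrose
equations for `Z`. If `𝒜` admits a weighting `k` and a coweighting `k'`, then
the magnitude of `𝒜` (the sum of the entries of the weighting) equals the sum
of all the entries of `X`. -/
theorem magnitude_finCat_eq_sum_pseudoinverse {A : Type*} [Category A]
    [Fintype A] [∀ a b : A, Fintype (a ⟶ b)]
    (Z : Matrix A A ℂ) (hZ : ∀ a b : A, Z a b = (Fintype.card (a ⟶ b) : ℂ))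
    (X : Matrix A A ℂ)
    (h1 : Z * X * Z = Z) (h2 : X * Z * X = X)
    (h3 : (Z * X)ᴴ = Z * X) (h4 : (X * Z)ᴴ = X * Z)
    (k k' : A → ℂ)
    (hk : Z *ᵥ k = fun _ => 1) (hk' : k' ᵥ* Z = fun _ => 1) :
    ∑ a, k a = ∑ a, ∑ b, X a b :=
  sum_weighting_eq_sum_entries_of_mul_mul_eq_self hk hk' h1
end

section
/- Let M be an m×m matrix and N an n×n matrix over ℂ, both having magnitude. Then the Kronecker product M ⊗ N has magnitude and χ(M ⊗ N) = χ(M)·χ(N). Concretely, if w, z are a weighting and coweighting of M and w', z' are a weighting and coweighting of N, then the vector ((i,j) ↦ wᵢ·w'ⱼ) is a weighting of M ⊗ N, the vector ((i,j) ↦ zᵢ·z'ⱼ) is a coweighting of M ⊗ N, and the magnitude of M ⊗ N equals (∑ᵢ wᵢ)·(∑ⱼ w'ⱼ). -/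
open Matrix BigOperators Kronecker

namespace Matrix

variable {R l m k n : Type*} [CommSemiring R] [Fintype m] [Fintype n]

theorem kronecker_mulVec_mul (A : Matrix l m R) (B : Matrix k n R) (v : m → R) (v' : n → R) :
    (A ⊗ₖ B) *ᵥ (fun p : m × n => v p.1 * v' p.2) = fun p => (A *ᵥ v) p.1 * (B *ᵥ v') p.2 := by
  funext p
  simp only [mulVec, dotProduct, kroneckerMap_apply, Fintype.sum_prod_type, Fintype.sum_mul_sum,
    mul_mul_mul_comm]

theorem mul_vecMul_kronecker (A : Matrix m l R) (B : Matrix n k R) (u : m → R) (u' : n → R) :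
    (fun p : m × n => u p.1 * u' p.2) ᵥ* (A ⊗ₖ B) = fun p => (u ᵥ* A) p.1 * (u' ᵥ* B) p.2 := by
  funext p
  simp only [vecMul, dotProduct, kroneckerMap_apply, Fintype.sum_prod_type, Fintype.sum_mul_sum,
    mul_mul_mul_comm]

end Matrix

/-- If `M` and `N` are square complex matrices with magnitude (weighting `w`,
coweighting `z` for `M`; weighting `w'`, coweighting `z'` for `N`), then the
Kronecker product `M ⊗ₖ N` has magnitude and
`χ(M ⊗ₖ N) = χ(M) · χ(N)`: the vector `(i,j) ↦ wᵢ · w'ⱼ` is a weighting of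
`M ⊗ₖ N`, the vector `(i,j) ↦ zᵢ · z'ⱼ` is a coweighting of `M ⊗ₖ N`, and the
sum of the entries of this weighting is `(∑ᵢ wᵢ) · (∑ⱼ w'ⱼ)`. -/
theorem magnitude_kronecker {m n : ℕ}
    (M : Matrix (Fin m) (Fin m) ℂ) (N : Matrix (Fin n) (Fin n) ℂ)
    (w z : Fin m → ℂ) (w' z' : Fin n → ℂ)
    (hw : M *ᵥ w = fun _ => 1) (hz : z ᵥ* M = fun _ => 1)
    (hw' : N *ᵥ w' = fun _ => 1) (hz' : z' ᵥ* N = fun _ => 1) :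
    ((M ⊗ₖ N) *ᵥ (fun p : Fin m × Fin n => w p.1 * w' p.2) = fun _ => 1) ∧
    ((fun p : Fin m × Fin n => z p.1 * z' p.2) ᵥ* (M ⊗ₖ N) = fun _ => 1) ∧
    (∑ p : Fin m × Fin n, w p.1 * w' p.2 = (∑ i, w i) * (∑ j, w' j)) := by
  refine ⟨?_, ?_, ?_⟩
  · simp only [kronecker_mulVec_mul, hw, hw', mul_one]
  · simp only [mul_vecMul_kronecker, hz, hz', mul_one]
  · rw [Fintype.sum_prod_type, Fintype.sum_mul_sum]
end
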